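/- arXiv:1005.0308 — 4 statements merged into one kernel-verified Lean document; each statement's English description precedes it below -/
import Mathlib

section
/- Let Γ be a directed graph satisfying properties (F) and (EE). Then every vertex of Γ has a unique root. -/
/-!
(F) says that `flip E` is well founded, so both claims go by Noetherian induction. A vertex
without outgoing edges is its own unique root, and otherwise a root of any successor is a root.
For uniqueness, two roots of `v` are roots of successors `w₁`, `w₂`; by induction every
successor has a unique root, and along an (EE)-chain from `w₁` to `w₂` consecutive successors
share a root, so the unique roots of `w₁` and `w₂` agree.
-/

def Subord {V : Type*} (E : V → V → Prop) (v w : V) : Prop :=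
  Relation.ReflTransGen E v w

def IsRoot {V : Type*} (E : V → V → Prop) (v w : V) : Prop :=
  Subord E v w ∧ ∀ x, ¬ E w x

def PropF {V : Type*} (E : V → V → Prop) : Prop :=
  ∀ v : V, ∃ C : ℕ, ∀ (n : ℕ) (f : ℕ → V), f 0 = v →
    (∀ i < n, E (f i) (f (i + 1))) → n ≤ C

/-- One step in the equivalence of edges emanating from `v`: both are edges from `v`,
and their terminal vertices have a common root. -/
def EdgeEquivStep {V : Type*} (E : V → V → Prop) (v w₁ w₂ : V) : Prop :=
  E v w₁ ∧ E v w₂ ∧ ∃ r, IsRoot E w₁ r ∧ IsRoot E w₂ r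

/-- Property (EE): any two edges with a common initial vertex are equivalent,
i.e., connected by a chain of edges from that vertex in which consecutive
terminal vertices have a common root. -/
def PropEE {V : Type*} (E : V → V → Prop) : Prop :=
  ∀ v w₁ w₂ : V, E v w₁ → E v w₂ →
    Relation.ReflTransGen (EdgeEquivStep E v) w₁ w₂

section

variable {V : Type*} {E : V → V → Prop}

theorem PropF.wellFounded_flip (hF : PropF E) : WellFounded (flip E) := by
  refine wellFounded_iff_isEmpty_descending_chain.mpr ⟨fun ⟨f, hf⟩ => ?_⟩
  obtain ⟨C, hC⟩ := hF (f 0)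
  have := hC (C + 1) f rfl fun i _ => hf i
  omega

theorem isRoot_self {v : V} (hv : ∀ x, ¬ E v x) : IsRoot E v v :=
  ⟨Relation.ReflTransGen.refl, hv⟩

theorem IsRoot.head {v w r : V} (hvw : E v w) (hr : IsRoot E w r) : IsRoot E v r :=
  ⟨Relation.ReflTransGen.head hvw hr.1, hr.2⟩

theorem IsRoot.eq_self_or_exists {v r : V} (hr : IsRoot E v r) :
    (r = v ∧ ∀ x, ¬ E v x) ∨ ∃ w, E v w ∧ IsRoot E w r := by
  rcases Relation.ReflTransGen.cases_head hr.1 with rfl | ⟨w, hvw, hwr⟩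
  · exact Or.inl ⟨rfl, hr.2⟩
  · exact Or.inr ⟨w, hvw, hwr, hr.2⟩

theorem exists_isRoot (hwf : WellFounded (flip E)) (v : V) : ∃ r, IsRoot E v r := by
  induction v using hwf.induction with
  | _ v ih =>
    by_cases hv : ∃ w, E v w
    · obtain ⟨w, hvw⟩ := hv
      obtain ⟨r, hr⟩ := ih w hvw
      exact ⟨r, hr.head hvw⟩
    · exact ⟨v, isRoot_self (not_exists.mp hv)⟩

theorem IsRoot.eq_of_edgeEquiv {v w₁ w₂ r₁ r₂ : V}
    (huniq : ∀ w, E v w → ∀ r r', IsRoot E w r → IsRoot E w r' → r = r')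
    (hvw₁ : E v w₁) (hchain : Relation.ReflTransGen (EdgeEquivStep E v) w₁ w₂)
    (hr₁ : IsRoot E w₁ r₁) (hr₂ : IsRoot E w₂ r₂) : r₁ = r₂ := by
  induction hchain generalizing r₂ with
  | refl => exact huniq w₁ hvw₁ r₁ r₂ hr₁ hr₂
  | tail _ hstep ih =>
    obtain ⟨_, hvc, r, hbr, hcr⟩ := hstep
    exact (ih hbr).trans (huniq _ hvc r r₂ hcr hr₂)

theorem IsRoot.unique (hwf : WellFounded (flip E)) (hEE : PropEE E) {v r₁ r₂ : V}
    (hr₁ : IsRoot E v r₁) (hr₂ : IsRoot E v r₂) : r₁ = r₂ := by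
  induction v using hwf.induction generalizing r₁ r₂ with
  | _ v ih =>
    rcases hr₁.eq_self_or_exists with ⟨rfl, hv⟩ | ⟨w₁, hvw₁, hw₁⟩
    · rcases hr₂.eq_self_or_exists with ⟨rfl, -⟩ | ⟨w₂, hvw₂, -⟩
      · rfl
      · exact absurd hvw₂ (hv w₂)
    · rcases hr₂.eq_self_or_exists with ⟨rfl, hv⟩ | ⟨w₂, hvw₂, hw₂⟩
      · exact absurd hvw₁ (hv w₁)
      · exact hw₁.eq_of_edgeEquiv (fun w hvw _ _ => ih w hvw) hvw₁
          (hEE v w₁ w₂ hvw₁ hvw₂) hw₂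

end

/-- Diamond Lemma: properties (F) and (EE) imply every vertex has a unique root. -/
theorem unique_root_of_propF_propEE {V : Type*} (E : V → V → Prop)
    (hF : PropF E) (hEE : PropEE E) : ∀ v : V, ∃! w : V, IsRoot E v w := by
  intro v
  have hwf := hF.wellFounded_flip
  obtain ⟨r, hr⟩ := exists_isRoot hwf v
  exact ⟨r, hr, fun _ hs => hs.unique hwf hEE hr⟩
end

section
/- Let T be a monoid and C its center. Suppose every element of T can be written as a product t₁ ⋯ tₙ of prime elements, uniquely up to transpositions of adjacent factors tᵢ tᵢ₊₁ where at least one of tᵢ, tᵢ₊₁ is central. Let T̂ be the submonoid generated by the non-central primes and C₀ the submonoid generated by the central primes. Then every element of T factors uniquely as a product of an element of T̂ and an element of C₀, i.e., T ≅ T̂ × C₀ provided T̂ ∩ C₀ = {e}. -/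
def IsPrimeEl {M : Type*} [Monoid M] (p : M) : Prop :=
  p ≠ 1 ∧ ∀ a b : M, p = a * b → a = 1 ∨ b = 1

/-- One transposition of two adjacent factors, at least one of which is central. -/
def SwapStep {T : Type*} [Monoid T] (l₁ l₂ : List T) : Prop :=
  ∃ (l l' : List T) (a b : T), (a ∈ Submonoid.center T ∨ b ∈ Submonoid.center T) ∧
    l₁ = l ++ a :: b :: l' ∧ l₂ = l ++ b :: a :: l'

/-!
Split a factorization `t = t₁ ⋯ tₙ` into the product of its non-central factors and the
product of its central factors. Since central factors can be moved to the right, the two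
products multiply to `t`; and a transposition of adjacent factors, one of them central, changes
neither product. By uniqueness of prime factorizations up to such transpositions, the pair of
products therefore depends only on `t`, and a factorization `t = a * b` with `a ∈ T̂`, `b ∈ C₀`
is recovered as the split of the concatenated prime factorizations of `a` and `b`.
-/

open scoped Classical

namespace List

variable {M : Type*} [Monoid M]

noncomputable def centralSplit (l : List M) : M × M :=
  ((l.filter (· ∉ Submonoid.center M)).prod, (l.filter (· ∈ Submonoid.center M)).prod)

theorem centralSplit_append (l₁ l₂ : List M) :
    centralSplit (l₁ ++ l₂) = centralSplit l₁ * centralSplit l₂ := by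
  simp only [centralSplit, filter_append, prod_append, Prod.mk_mul_mk]

theorem centralSplit_cons (a : M) (l : List M) :
    centralSplit (a :: l) = centralSplit [a] * centralSplit l :=
  centralSplit_append [a] l

theorem centralSplit_singleton_of_mem_center {a : M} (ha : a ∈ Submonoid.center M) :
    centralSplit [a] = (1, a) := by
  simp [centralSplit, ha]

theorem centralSplit_singleton_of_notMem_center {a : M} (ha : a ∉ Submonoid.center M) :
    centralSplit [a] = (a, 1) := by
  simp [centralSplit, ha]

theorem prod_eq_centralSplit_fst_mul_snd (l : List M) :
    l.prod = l.centralSplit.1 * l.centralSplit.2 := by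
  induction l with
  | nil => exact (one_mul 1).symm
  | cons a l ih =>
    rw [prod_cons, ih, centralSplit_cons]
    by_cases ha : a ∈ Submonoid.center M
    · rw [centralSplit_singleton_of_mem_center ha, Prod.fst_mul, Prod.snd_mul, one_mul,
        ← mul_assoc, (Submonoid.mem_center_iff.mp ha _).symm, mul_assoc]
    · rw [centralSplit_singleton_of_notMem_center ha, Prod.fst_mul, Prod.snd_mul, one_mul,
        mul_assoc]

theorem commute_centralSplit_singleton_of_mem_center {a : M} (ha : a ∈ Submonoid.center M)
    (x : M × M) : Commute (centralSplit [a]) x := by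
  rw [centralSplit_singleton_of_mem_center ha]
  exact Commute.prod (Commute.one_left _) (Submonoid.mem_center_iff.mp ha _).symm

theorem centralSplit_of_forall_notMem_center {l : List M}
    (hl : ∀ x ∈ l, x ∉ Submonoid.center M) : l.centralSplit = (l.prod, 1) := by
  rw [centralSplit, filter_eq_self.mpr fun x hx => by simpa using hl x hx,
    filter_eq_nil_iff.mpr fun x hx => by simpa using hl x hx, prod_nil]

theorem centralSplit_of_forall_mem_center {l : List M}
    (hl : ∀ x ∈ l, x ∈ Submonoid.center M) : l.centralSplit = (1, l.prod) := by
  rw [centralSplit, filter_eq_nil_iff.mpr fun x hx => by simpa using hl x hx,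
    filter_eq_self.mpr fun x hx => by simpa using hl x hx, prod_nil]

theorem centralSplit_fst_mem_closure {P : M → Prop} {l : List M} (hl : ∀ x ∈ l, P x) :
    l.centralSplit.1 ∈ Submonoid.closure {x | P x ∧ x ∉ Submonoid.center M} :=
  Submonoid.list_prod_mem _ fun x hx => Submonoid.subset_closure
    ⟨hl x (mem_of_mem_filter hx), by simpa using of_mem_filter hx⟩

theorem centralSplit_snd_mem_closure {P : M → Prop} {l : List M} (hl : ∀ x ∈ l, P x) :
    l.centralSplit.2 ∈ Submonoid.closure {x | P x ∧ x ∈ Submonoid.center M} :=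
  Submonoid.list_prod_mem _ fun x hx => Submonoid.subset_closure
    ⟨hl x (mem_of_mem_filter hx), by simpa using of_mem_filter hx⟩

end List

theorem SwapStep.centralSplit_eq {M : Type*} [Monoid M] {l₁ l₂ : List M}
    (h : SwapStep l₁ l₂) : l₁.centralSplit = l₂.centralSplit := by
  obtain ⟨l, l', a, b, hab, rfl, rfl⟩ := h
  have hswap : Commute (List.centralSplit [a]) (List.centralSplit [b]) :=
    hab.elim (fun ha => List.commute_centralSplit_singleton_of_mem_center ha _)
      fun hb => (List.commute_centralSplit_singleton_of_mem_center hb _).symm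
  rw [show a :: b :: l' = [a] ++ [b] ++ l' from rfl, show b :: a :: l' = [b] ++ [a] ++ l' from rfl]
  simp only [List.centralSplit_append, hswap.eq]

theorem centralSplit_eq_of_reflTransGen_swapStep {M : Type*} [Monoid M] {l₁ l₂ : List M}
    (h : Relation.ReflTransGen SwapStep l₁ l₂) : l₁.centralSplit = l₂.centralSplit := by
  induction h with
  | refl => rfl
  | tail _ hstep ih => exact ih.trans hstep.centralSplit_eq

theorem unique_central_factorization_general {T : Type*} [Monoid T]
    (hex : ∀ t : T, ∃ l : List T, (∀ p ∈ l, IsPrimeEl p) ∧ l.prod = t)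
    (huniq : ∀ l₁ l₂ : List T, (∀ p ∈ l₁, IsPrimeEl p) → (∀ p ∈ l₂, IsPrimeEl p) →
      l₁.prod = l₂.prod → Relation.ReflTransGen SwapStep l₁ l₂) :
    ∀ t : T, ∃! ab : T × T,
      ab.1 ∈ Submonoid.closure {p : T | IsPrimeEl p ∧ p ∉ Submonoid.center T} ∧
      ab.2 ∈ Submonoid.closure {p : T | IsPrimeEl p ∧ p ∈ Submonoid.center T} ∧
      t = ab.1 * ab.2 := by
  intro t
  obtain ⟨l, hl, rfl⟩ := hex t
  refine ⟨l.centralSplit, ⟨List.centralSplit_fst_mem_closure hl,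
    List.centralSplit_snd_mem_closure hl, l.prod_eq_centralSplit_fst_mul_snd⟩, ?_⟩
  rintro ⟨a, b⟩ ⟨ha, hb, hab⟩
  obtain ⟨la, hla, rfl⟩ := Submonoid.exists_list_of_mem_closure ha
  obtain ⟨lb, hlb, rfl⟩ := Submonoid.exists_list_of_mem_closure hb
  have hprime : ∀ p ∈ la ++ lb, IsPrimeEl p :=
    List.forall_mem_append.2 ⟨fun p hp => (hla p hp).1, fun p hp => (hlb p hp).1⟩
  calc (la.prod, lb.prod)
      = (la ++ lb).centralSplit := by
        rw [List.centralSplit_append,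
          List.centralSplit_of_forall_notMem_center fun x hx => (hla x hx).2,
          List.centralSplit_of_forall_mem_center fun x hx => (hlb x hx).2,
          Prod.mk_mul_mk, mul_one, one_mul]
    _ = l.centralSplit :=
        centralSplit_eq_of_reflTransGen_swapStep
          (huniq _ _ hprime hl (by rw [List.prod_append, hab]))

/-- If every element of `T` is a product of primes, uniquely up to transpositions
of adjacent factors one of which is central, then (assuming the submonoid `T̂`
generated by the non-central primes meets the submonoid `C₀` generated by the
central primes trivially) every element of `T` factors uniquely as an element of
`T̂` times an element of `C₀`. -/
theorem unique_central_factorization {T : Type*} [Monoid T]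
    (hex : ∀ t : T, ∃ l : List T, (∀ p ∈ l, IsPrimeEl p) ∧ l.prod = t)
    (huniq : ∀ l₁ l₂ : List T, (∀ p ∈ l₁, IsPrimeEl p) → (∀ p ∈ l₂, IsPrimeEl p) →
      l₁.prod = l₂.prod → Relation.ReflTransGen SwapStep l₁ l₂)
    (htriv : Submonoid.closure {p : T | IsPrimeEl p ∧ p ∉ Submonoid.center T} ⊓
        Submonoid.closure {p : T | IsPrimeEl p ∧ p ∈ Submonoid.center T} = ⊥) :
    ∀ t : T, ∃! ab : T × T,
      ab.1 ∈ Submonoid.closure {p : T | IsPrimeEl p ∧ p ∉ Submonoid.center T} ∧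
      ab.2 ∈ Submonoid.closure {p : T | IsPrimeEl p ∧ p ∈ Submonoid.center T} ∧
      t = ab.1 * ab.2 :=
  unique_central_factorization_general hex huniq
end

section
/- Let T be a monoid in which every nonidentity element is a product of primes, and suppose prime factorizations are unique up to moving central prime factors past arbitrary factors (i.e., up to relations t′t″ = t″t′ where t′ or t″ is central). If no prime of T is central, then T is a free monoid on its set of primes. -/
/-- With no central prime, no swap applies to a word in the primes, so uniqueness up to
swaps is plain uniqueness of the word, and existence of factorizations is surjectivity. -/
lemma eq_of_reflTransGen_swapStep {T : Type*} [Monoid T] {l₁ l₂ : List T}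
    (hl₁ : ∀ p ∈ l₁, p ∉ Submonoid.center T) (h : Relation.ReflTransGen SwapStep l₁ l₂) :
    l₁ = l₂ := by
  rcases h.cases_head with rfl | ⟨_, ⟨l, l', a, b, hab, rfl, -⟩, -⟩
  · rfl
  · rcases hab with ha | hb
    · exact absurd ha (hl₁ a (by simp))
    · exact absurd hb (hl₁ b (by simp))

/-- If every nonidentity element is a product of primes, prime factorizations are
unique up to moving central factors past adjacent factors, and no prime is
central, then the monoid is free on its primes: the map sending a word in the
primes to its product is bijective. -/
theorem free_monoid_on_primes {T : Type*} [Monoid T]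
    (hex : ∀ t : T, t ≠ 1 →
      ∃ l : List T, l ≠ [] ∧ (∀ p ∈ l, IsPrimeEl p) ∧ l.prod = t)
    (huniq : ∀ l₁ l₂ : List T, (∀ p ∈ l₁, IsPrimeEl p) → (∀ p ∈ l₂, IsPrimeEl p) →
      l₁.prod = l₂.prod → Relation.ReflTransGen SwapStep l₁ l₂)
    (hnc : ∀ p : T, IsPrimeEl p → p ∉ Submonoid.center T) :
    Function.Bijective
      (fun l : List {p : T // IsPrimeEl p} => (l.map Subtype.val).prod) := by
  have hprime (l : List {p : T // IsPrimeEl p}) : ∀ p ∈ l.map Subtype.val, IsPrimeEl p := by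
    simp only [List.mem_map]
    rintro _ ⟨q, -, rfl⟩
    exact q.2
  refine ⟨fun l₁ l₂ h => ?_, fun t => ?_⟩
  · have hswap := huniq _ _ (hprime l₁) (hprime l₂) h
    exact List.map_injective_iff.mpr Subtype.val_injective
      (eq_of_reflTransGen_swapStep (fun p hp => hnc p (hprime l₁ p hp)) hswap)
  · obtain rfl | ht := eq_or_ne t 1
    · exact ⟨[], rfl⟩
    obtain ⟨l, -, hl, rfl⟩ := hex t ht
    lift l to List {p : T // IsPrimeEl p} using hl
    exact ⟨l, rfl⟩
end

section
/- Let Γ be a directed graph with property (F), and suppose that for every vertex V and every pair of edges e₁ : V → W₁ and e₂ : V → W₂, either W₁ = W₂ or the terminal vertices W₁, W₂ have a common root. Then property (EE) holds for Γ, and hence every vertex has a unique root. -/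
lemma acc_of_bound {V : Type*} (E : V → V → Prop) :
    ∀ C : ℕ, ∀ v : V, (∀ (n : ℕ) (f : ℕ → V), f 0 = v →
      (∀ i < n, E (f i) (f (i + 1))) → n ≤ C) → Acc (fun a b => E b a) v := by
  intro C
  induction C with
  | zero =>
    intro v hv
    constructor
    intro w hw
    exfalso
    have := hv 1 (fun i => if i = 0 then v else w) rfl (by
      intro i hi
      interval_cases i
      simpa using hw)
    omega
  | succ C ih =>
    intro v hv
    constructor
    intro w hw
    apply ih
    intro n f hf0 hchain
    have := hv (n + 1) (fun i => if i = 0 then v else f (i - 1)) rfl (by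
      intro i hi
      cases i with
      | zero => simpa [hf0] using hw
      | succ j =>
        simpa using hchain j (by omega))
    omega

lemma acc_of_propF {V : Type*} {E : V → V → Prop} (hF : PropF E) (v : V) :
    Acc (fun a b => E b a) v := by
  obtain ⟨C, hC⟩ := hF v
  exact acc_of_bound E C v hC

lemma root_exists {V : Type*} {E : V → V → Prop} (hF : PropF E) (v : V) :
    ∃ w, IsRoot E v w := by
  induction acc_of_propF hF v with
  | intro v _ ih =>
    by_cases h : ∃ w, E v w
    · obtain ⟨w, hw⟩ := h
      obtain ⟨r, hr⟩ := ih w hw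
      exact ⟨r, Relation.ReflTransGen.head hw hr.1, hr.2⟩
    · exact ⟨v, Relation.ReflTransGen.refl, fun x hx => h ⟨x, hx⟩⟩

lemma root_unique {V : Type*} {E : V → V → Prop} (hF : PropF E)
    (hloc : ∀ v w₁ w₂ : V, E v w₁ → E v w₂ →
      w₁ = w₂ ∨ ∃ r, IsRoot E w₁ r ∧ IsRoot E w₂ r)
    (v : V) : ∀ r₁ r₂, IsRoot E v r₁ → IsRoot E v r₂ → r₁ = r₂ := by
  induction acc_of_propF hF v with
  | intro v _ ih =>
    intro r₁ r₂ h₁ h₂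
    rcases Relation.ReflTransGen.cases_head h₁.1 with rfl | ⟨w₁, hw₁, hp₁⟩
    · rcases Relation.ReflTransGen.cases_head h₂.1 with rfl | ⟨w₂, hw₂, _⟩
      · rfl
      · exact absurd hw₂ (h₁.2 w₂)
    rcases Relation.ReflTransGen.cases_head h₂.1 with rfl | ⟨w₂, hw₂, hp₂⟩
    · exact absurd hw₁ (h₂.2 w₁)
    rcases hloc v w₁ w₂ hw₁ hw₂ with rfl | ⟨r, hr₁, hr₂⟩
    · exact ih w₁ hw₁ r₁ r₂ ⟨hp₁, h₁.2⟩ ⟨hp₂, h₂.2⟩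
    · have e₁ : r₁ = r := ih w₁ hw₁ r₁ r ⟨hp₁, h₁.2⟩ hr₁
      have e₂ : r₂ = r := ih w₂ hw₂ r₂ r ⟨hp₂, h₂.2⟩ hr₂
      rw [e₁, e₂]

/-- If Γ has property (F) and any two one-step reducts of a vertex are equal or
have a common root, then property (EE) holds and every vertex has a unique root. -/
theorem propEE_of_local_confluence {V : Type*} (E : V → V → Prop)
    (hF : PropF E)
    (hloc : ∀ v w₁ w₂ : V, E v w₁ → E v w₂ →
      w₁ = w₂ ∨ ∃ r, IsRoot E w₁ r ∧ IsRoot E w₂ r) :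
    PropEE E ∧ ∀ v : V, ∃! w : V, IsRoot E v w := by
  constructor
  · intro v w₁ w₂ h₁ h₂
    rcases hloc v w₁ w₂ h₁ h₂ with rfl | ⟨r, hr⟩
    · exact Relation.ReflTransGen.refl
    · exact Relation.ReflTransGen.single ⟨h₁, h₂, r, hr⟩
  · intro v
    obtain ⟨w, hw⟩ := root_exists hF v
    exact ⟨w, hw, fun w' hw' => root_unique hF hloc v w' w hw' hw⟩
end
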